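/- Under the same setup as the block-inverse formula, if moreover d > 0 then the complexity gap CG = yᵀ H⁻¹ y − y'ᵀ A⁻¹ y' equals ((y'ᵀ h)/√d + y_n √d)², and in particular CG ≥ 0. -/
import Mathlib


open Matrix

/-- With `d > 0`, the complexity gap equals `((y'ᵀh)/√d + yₙ√d)²`, and in
particular is nonnegative. -/
theorem stmt3 (m : ℕ) (H : Matrix (Fin (m + 1)) (Fin (m + 1)) ℝ)
    (hsymm : H.IsSymm) (hinv : IsUnit H.det)
    (A : Matrix (Fin m) (Fin m) ℝ)
    (hA : ∀ i j, A i j = H i.castSucc j.castSucc)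
    (hAinv : IsUnit A.det)
    (h : Fin m → ℝ) (d : ℝ)
    (hh : ∀ i, h i = H⁻¹ i.castSucc (Fin.last m))
    (hd : d = H⁻¹ (Fin.last m) (Fin.last m))
    (hd0 : 0 < d)
    (y : Fin (m + 1) → ℝ) (y' : Fin m → ℝ) (yn : ℝ)
    (hy' : ∀ i, y' i = y i.castSucc) (hyn : yn = y (Fin.last m)) :
    y ⬝ᵥ (H⁻¹ *ᵥ y) - y' ⬝ᵥ (A⁻¹ *ᵥ y')
        = ((y' ⬝ᵥ h) / Real.sqrt d + yn * Real.sqrt d) ^ 2 ∧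
      0 ≤ y ⬝ᵥ (H⁻¹ *ᵥ y) - y' ⬝ᵥ (A⁻¹ *ᵥ y') := by
  have hd' : d ≠ 0 := ne_of_gt hd0
  have hKsymm : ∀ i j, H⁻¹ i j = H⁻¹ j i := by
    intro i j
    have : (H⁻¹)ᵀ = H⁻¹ := by
      rw [Matrix.transpose_nonsing_inv, hsymm.eq]
    exact congrFun (congrFun this j) i
  have hHK : H * H⁻¹ = 1 := Matrix.mul_nonsing_inv H hinv
  have hrow : ∀ i : Fin m, ∀ j : Fin (m+1),
      (∑ k : Fin m, A i k * H⁻¹ k.castSucc j) + H i.castSucc (Fin.last m) * H⁻¹ (Fin.last m) j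
        = (1 : Matrix (Fin (m+1)) (Fin (m+1)) ℝ) i.castSucc j := by
    intro i j
    have := congrFun (congrFun hHK i.castSucc) j
    rw [Matrix.mul_apply, Fin.sum_univ_castSucc] at this
    simpa [hA] using this
  have hlast : ∀ j : Fin m, H⁻¹ (Fin.last m) j.castSucc = h j := by
    intro j; rw [hKsymm, hh]
  set M : Matrix (Fin m) (Fin m) ℝ :=
    fun i j => H⁻¹ i.castSucc j.castSucc - h i * h j / d with hM
  have hAM : A * M = 1 := by
    ext i j
    have e1 := hrow i j.castSucc
    have e2 := hrow i (Fin.last m)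
    rw [hlast j] at e1
    rw [← hd] at e2
    simp_rw [← hh] at e2
    have one2 : (1 : Matrix (Fin (m+1)) (Fin (m+1)) ℝ) i.castSucc (Fin.last m) = 0 := by
      simp [Matrix.one_apply, (Fin.castSucc_lt_last i).ne]
    rw [one2] at e2
    have one1 : (1 : Matrix (Fin (m+1)) (Fin (m+1)) ℝ) i.castSucc j.castSucc
        = (1 : Matrix (Fin m) (Fin m) ℝ) i j := by
      simp [Matrix.one_apply, Fin.castSucc_inj]
    rw [one1] at e1
    have hsum : ∑ k : Fin m, A i k * (h k * h j / d)
        = (∑ k : Fin m, A i k * h k) * h j / d := by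
      simp_rw [show ∀ k, A i k * (h k * h j / d) = A i k * h k * h j / d from fun k => by ring]
      rw [← Finset.sum_div, ← Finset.sum_mul]
    rw [Matrix.mul_apply]
    simp only [hM, mul_sub]
    rw [Finset.sum_sub_distrib, hsum]
    have hs : (∑ k : Fin m, A i k * h k) = - (H i.castSucc (Fin.last m) * d) := by
      linarith [e2]
    have hr : ∑ k : Fin m, A i k * H⁻¹ k.castSucc j.castSucc
        = (1 : Matrix (Fin m) (Fin m) ℝ) i j - H i.castSucc (Fin.last m) * h j := by
      linarith [e1]
    rw [hs, hr]
    field_simp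
    ring
  have hAinvM : A⁻¹ = M := Matrix.inv_eq_right_inv hAM
  set s : ℝ := y' ⬝ᵥ h with hs
  have hs' : s = ∑ i, y' i * h i := rfl
  have hq2 : y' ⬝ᵥ (A⁻¹ *ᵥ y')
      = (∑ i, ∑ j, y' i * (H⁻¹ i.castSucc j.castSucc * y' j)) - s * s / d := by
    rw [hAinvM]
    simp only [dotProduct, mulVec, dotProduct, hM, sub_mul, mul_sub,
      Finset.sum_sub_distrib, Finset.mul_sum]
    congr 1
    rw [hs', Finset.sum_mul, Finset.sum_div]
    refine Finset.sum_congr rfl fun i _ => ?_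
    rw [Finset.mul_sum, Finset.sum_div]
    refine Finset.sum_congr rfl fun j _ => by ring
  have hq1 : y ⬝ᵥ (H⁻¹ *ᵥ y)
      = (∑ i, ∑ j, y' i * (H⁻¹ i.castSucc j.castSucc * y' j)) + s * yn + yn * s + yn * d * yn := by
    simp only [dotProduct, mulVec, dotProduct]
    rw [Fin.sum_univ_castSucc]
    simp_rw [Fin.sum_univ_castSucc (n := m)]
    simp only [← hy', ← hyn, hlast, ← hh, ← hd]
    simp_rw [mul_add]
    rw [Finset.sum_add_distrib]
    have t1 : ∑ x : Fin m, y' x * (h x * yn) = s * yn := by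
      rw [hs', Finset.sum_mul]
      exact Finset.sum_congr rfl fun x _ => by ring
    have t2 : (∑ x : Fin m, yn * (h x * y' x)) = yn * s := by
      rw [hs', Finset.mul_sum]
      exact Finset.sum_congr rfl fun x _ => by ring
    simp_rw [Finset.mul_sum]
    rw [t1, t2]
    ring
  have h2 : Real.sqrt d ≠ 0 := by positivity
  have h1 : Real.sqrt d * Real.sqrt d = d := Real.mul_self_sqrt hd0.le
  have key : y ⬝ᵥ (H⁻¹ *ᵥ y) - y' ⬝ᵥ (A⁻¹ *ᵥ y')
      = (s / Real.sqrt d + yn * Real.sqrt d) ^ 2 := by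
    rw [hq1, hq2]
    have : (s / Real.sqrt d + yn * Real.sqrt d) ^ 2
        = s * s / d + s * yn + yn * s + yn * d * yn := by
      rw [add_sq, div_pow, Real.sq_sqrt hd0.le, mul_pow, Real.sq_sqrt hd0.le]
      have mid : s / Real.sqrt d * (yn * Real.sqrt d) = s * yn := by
        field_simp
      rw [mul_assoc 2, mid]
      ring
    rw [this]; ring
  exact ⟨key, key ▸ sq_nonneg _⟩
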